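/- arXiv:2412.17568 — 6 statements merged into one kernel-verified Lean document; each statement's English description precedes it below -/
import Mathlib

section
/- Consider the Anderies pre-industrial ODE system: A1' = k1·A1^{p1}·A2^{q1} − k2·A1^{p2}·A2^{q2}, A2' = −A1' − a·A2 + a·β·A3, A3' = a·A2 − a·β·A3, with positive rate constants k1, k2, a, β. If q1 = q2 and p1 ≠ p2, then every positive steady state satisfies A1 = (k1/k2)^{1/(p2−p1)} and A3 = A2/β; in particular the value of A1 is the same at all positive steady states (absolute concentration robustness in A1). -/
open Real

/-- For the Q-null Anderies pre-industrial system (`q1 = q2`, `p1 ≠ p2`), every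
positive steady state satisfies `A1 = (k1/k2)^(1/(p2-p1))` and `A3 = A2/β`;
in particular `A1` has absolute concentration robustness. -/
theorem stmt_3 (k1 k2 a β p1 p2 q1 q2 A1 A2 A3 : ℝ)
    (hk1 : 0 < k1) (hk2 : 0 < k2) (ha : 0 < a) (hβ : 0 < β)
    (hq : q1 = q2) (hp : p1 ≠ p2)
    (hA1 : 0 < A1) (hA2 : 0 < A2) (hA3 : 0 < A3)
    (h1 : k1 * A1 ^ p1 * A2 ^ q1 - k2 * A1 ^ p2 * A2 ^ q2 = 0)
    (h2 : -(k1 * A1 ^ p1 * A2 ^ q1 - k2 * A1 ^ p2 * A2 ^ q2) - a * A2 + a * β * A3 = 0)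
    (h3 : a * A2 - a * β * A3 = 0) :
    A1 = (k1 / k2) ^ (1 / (p2 - p1)) ∧ A3 = A2 / β := by
  subst hq
  have hA2q : (0:ℝ) < A2 ^ q1 := Real.rpow_pos_of_pos hA2 _
  have hkey : k1 * A1 ^ p1 = k2 * A1 ^ p2 := by
    have := sub_eq_zero.mp h1
    exact mul_right_cancel₀ (ne_of_gt hA2q) this
  constructor
  · have hratio : k1 / k2 = A1 ^ (p2 - p1) := by
      rw [Real.rpow_sub hA1]
      rw [div_eq_div_iff (ne_of_gt hk2) (ne_of_gt (Real.rpow_pos_of_pos hA1 p1))]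
      linarith [hkey]
    have hpd : p2 - p1 ≠ 0 := sub_ne_zero.mpr (Ne.symm hp)
    rw [hratio, ← Real.rpow_mul hA1.le, mul_one_div, div_self hpd, Real.rpow_one]
  · field_simp
    nlinarith [h3, mul_pos ha hβ]
end

section
/- For the Q-null Anderies system (q1 = q2, p1 ≠ p2), any two positive steady states that lie in the same stoichiometric compatibility class (i.e., have equal total carbon A1+A2+A3) are identical. Hence the Q-null Anderies system is monostationary. -/
open Real

lemma log_eq_of_steady (k1 k2 p1 p2 x : ℝ) (hk1 : 0 < k1) (hk2 : 0 < k2)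
    (hp : p1 ≠ p2) (hx : 0 < x) (h : k1 * x ^ p1 = k2 * x ^ p2) :
    Real.log x = (Real.log k1 - Real.log k2) / (p2 - p1) := by
  have h1 : Real.log (k1 * x ^ p1) = Real.log k1 + p1 * Real.log x := by
    rw [Real.log_mul hk1.ne' (Real.rpow_pos_of_pos hx p1).ne', Real.log_rpow hx]
  have h2 : Real.log (k2 * x ^ p2) = Real.log k2 + p2 * Real.log x := by
    rw [Real.log_mul hk2.ne' (Real.rpow_pos_of_pos hx p2).ne', Real.log_rpow hx]
  have : Real.log k1 + p1 * Real.log x = Real.log k2 + p2 * Real.log x := by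
    rw [← h1, ← h2, h]
  have hd : p2 - p1 ≠ 0 := sub_ne_zero.mpr (Ne.symm hp)
  field_simp
  linarith

/-- The Q-null Anderies system (`q1 = q2`, `p1 ≠ p2`) is monostationary: any two
positive steady states with the same total carbon `A1 + A2 + A3` coincide. -/
theorem stmt_4 (k1 k2 a β p1 p2 q1 q2 A1 A2 A3 B1 B2 B3 : ℝ)
    (hk1 : 0 < k1) (hk2 : 0 < k2) (ha : 0 < a) (hβ : 0 < β)
    (hq : q1 = q2) (hp : p1 ≠ p2)
    (hA1 : 0 < A1) (hA2 : 0 < A2) (hA3 : 0 < A3)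
    (hB1 : 0 < B1) (hB2 : 0 < B2) (hB3 : 0 < B3)
    (hA_1 : k1 * A1 ^ p1 * A2 ^ q1 - k2 * A1 ^ p2 * A2 ^ q2 = 0)
    (hA_2 : -(k1 * A1 ^ p1 * A2 ^ q1 - k2 * A1 ^ p2 * A2 ^ q2) - a * A2 + a * β * A3 = 0)
    (hA_3 : a * A2 - a * β * A3 = 0)
    (hB_1 : k1 * B1 ^ p1 * B2 ^ q1 - k2 * B1 ^ p2 * B2 ^ q2 = 0)
    (hB_2 : -(k1 * B1 ^ p1 * B2 ^ q1 - k2 * B1 ^ p2 * B2 ^ q2) - a * B2 + a * β * B3 = 0)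
    (hB_3 : a * B2 - a * β * B3 = 0)
    (hsum : A1 + A2 + A3 = B1 + B2 + B3) :
    A1 = B1 ∧ A2 = B2 ∧ A3 = B3 := by
  subst hq
  -- cancel A2 ^ q1
  have hA2q : (A2 : ℝ) ^ q1 ≠ 0 := (Real.rpow_pos_of_pos hA2 q1).ne'
  have hB2q : (B2 : ℝ) ^ q1 ≠ 0 := (Real.rpow_pos_of_pos hB2 q1).ne'
  have hA' : k1 * A1 ^ p1 = k2 * A1 ^ p2 := by
    have : (k1 * A1 ^ p1) * A2 ^ q1 = (k2 * A1 ^ p2) * A2 ^ q1 := by linarith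
    exact mul_right_cancel₀ hA2q this
  have hB' : k1 * B1 ^ p1 = k2 * B1 ^ p2 := by
    have : (k1 * B1 ^ p1) * B2 ^ q1 = (k2 * B1 ^ p2) * B2 ^ q1 := by linarith
    exact mul_right_cancel₀ hB2q this
  have hlog : Real.log A1 = Real.log B1 := by
    rw [log_eq_of_steady k1 k2 p1 p2 A1 hk1 hk2 hp hA1 hA',
        log_eq_of_steady k1 k2 p1 p2 B1 hk1 hk2 hp hB1 hB']
  have h1 : A1 = B1 := by
    rw [← Real.exp_log hA1, ← Real.exp_log hB1, hlog]
  have hA23 : A2 = β * A3 := by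
    have := hA_3
    nlinarith
  have hB23 : B2 = β * B3 := by nlinarith
  have h3 : A3 = B3 := by
    have : (β + 1) * A3 = (β + 1) * B3 := by linarith [hsum, h1, hA23, hB23]
    exact mul_left_cancel₀ (by positivity) this
  exact ⟨h1, by rw [hA23, hB23, h3], h3⟩
end

section
/- Consider the DAC (Direct Air Capture) system ODEs with q1 = q2 and p1 ≠ p2 (Q-null class). Every positive steady state satisfies A1 = (k1/k2)^{1/(p2−p1)}, A3 = A2/β, A4 = (k4/k5)·A2, A5 = (k4/k6)·A2, and any two positive steady states with the same total A1+A2+A3+A4+A5 coincide. Hence the system is monostationary with ACR in A1. -/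
open Real

lemma acr_aux (k1 k2 p1 p2 q1 : ℝ) (hk1 : 0 < k1) (hk2 : 0 < k2) (hp : p1 ≠ p2)
    (A1 A2 : ℝ) (hA1 : 0 < A1) (hA2 : 0 < A2)
    (heq : k1 * A1 ^ p1 * A2 ^ q1 - k2 * A1 ^ p2 * A2 ^ q1 = 0) :
    A1 = (k1 / k2) ^ (1 / (p2 - p1)) := by
  have h2 : (0:ℝ) < A2 ^ q1 := Real.rpow_pos_of_pos hA2 _
  have h3 : k1 * A1 ^ p1 = k2 * A1 ^ p2 := by
    have h := sub_eq_zero.mp heq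
    exact mul_right_cancel₀ (ne_of_gt h2) h
  have hd : p2 - p1 ≠ 0 := sub_ne_zero.mpr (Ne.symm hp)
  have h4 : A1 ^ (p2 - p1) = k1 / k2 := by
    rw [Real.rpow_sub hA1, div_eq_div_iff (Real.rpow_pos_of_pos hA1 p1).ne' hk2.ne']
    linarith
  calc A1 = A1 ^ ((p2 - p1) * (1 / (p2 - p1))) := by
        rw [mul_one_div_cancel hd, Real.rpow_one]
    _ = (A1 ^ (p2 - p1)) ^ (1 / (p2 - p1)) := Real.rpow_mul hA1.le _ _
    _ = (k1 / k2) ^ (1 / (p2 - p1)) := by rw [h4]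

/-- The Q-null DAC system: every positive steady state satisfies
`A1 = (k1/k2)^(1/(p2-p1))`, `A3 = A2/β`, `A4 = (k4/k5) A2`, `A5 = (k4/k6) A2`,
and any two positive steady states with the same total coincide
(monostationarity with ACR in `A1`). -/
theorem stmt_6 (k1 k2 k4 k5 k6 a β p1 p2 q1 q2 : ℝ)
    (hk1 : 0 < k1) (hk2 : 0 < k2) (hk4 : 0 < k4) (hk5 : 0 < k5) (hk6 : 0 < k6)
    (ha : 0 < a) (hβ : 0 < β) (hq : q1 = q2) (hp : p1 ≠ p2) :
    (∀ A1 A2 A3 A4 A5 : ℝ, 0 < A1 → 0 < A2 → 0 < A3 → 0 < A4 → 0 < A5 →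
      k1 * A1 ^ p1 * A2 ^ q1 - k2 * A1 ^ p2 * A2 ^ q2 = 0 →
      -(k1 * A1 ^ p1 * A2 ^ q1 - k2 * A1 ^ p2 * A2 ^ q2)
        - a * A2 + a * β * A3 + k5 * A4 - k4 * A2 = 0 →
      a * A2 - a * β * A3 = 0 →
      k6 * A5 - k5 * A4 = 0 →
      k4 * A2 - k6 * A5 = 0 →
      A1 = (k1 / k2) ^ (1 / (p2 - p1)) ∧ A3 = A2 / β ∧
        A4 = (k4 / k5) * A2 ∧ A5 = (k4 / k6) * A2) ∧
    (∀ A1 A2 A3 A4 A5 B1 B2 B3 B4 B5 : ℝ,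
      0 < A1 → 0 < A2 → 0 < A3 → 0 < A4 → 0 < A5 →
      0 < B1 → 0 < B2 → 0 < B3 → 0 < B4 → 0 < B5 →
      k1 * A1 ^ p1 * A2 ^ q1 - k2 * A1 ^ p2 * A2 ^ q2 = 0 →
      -(k1 * A1 ^ p1 * A2 ^ q1 - k2 * A1 ^ p2 * A2 ^ q2)
        - a * A2 + a * β * A3 + k5 * A4 - k4 * A2 = 0 →
      a * A2 - a * β * A3 = 0 →
      k6 * A5 - k5 * A4 = 0 →
      k4 * A2 - k6 * A5 = 0 →
      k1 * B1 ^ p1 * B2 ^ q1 - k2 * B1 ^ p2 * B2 ^ q2 = 0 →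
      -(k1 * B1 ^ p1 * B2 ^ q1 - k2 * B1 ^ p2 * B2 ^ q2)
        - a * B2 + a * β * B3 + k5 * B4 - k4 * B2 = 0 →
      a * B2 - a * β * B3 = 0 →
      k6 * B5 - k5 * B4 = 0 →
      k4 * B2 - k6 * B5 = 0 →
      A1 + A2 + A3 + A4 + A5 = B1 + B2 + B3 + B4 + B5 →
      A1 = B1 ∧ A2 = B2 ∧ A3 = B3 ∧ A4 = B4 ∧ A5 = B5) := by
  subst hq
  have key : ∀ A1 A2 A3 A4 A5 : ℝ, 0 < A1 → 0 < A2 → 0 < A3 → 0 < A4 → 0 < A5 →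
      k1 * A1 ^ p1 * A2 ^ q1 - k2 * A1 ^ p2 * A2 ^ q1 = 0 →
      -(k1 * A1 ^ p1 * A2 ^ q1 - k2 * A1 ^ p2 * A2 ^ q1)
        - a * A2 + a * β * A3 + k5 * A4 - k4 * A2 = 0 →
      a * A2 - a * β * A3 = 0 →
      k6 * A5 - k5 * A4 = 0 →
      k4 * A2 - k6 * A5 = 0 →
      A1 = (k1 / k2) ^ (1 / (p2 - p1)) ∧ A3 = A2 / β ∧
        A4 = (k4 / k5) * A2 ∧ A5 = (k4 / k6) * A2 := by
    intro A1 A2 A3 A4 A5 h1 h2 h3 h4 h5 e1 e2 e3 e4 e5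
    refine ⟨acr_aux k1 k2 p1 p2 q1 hk1 hk2 hp A1 A2 h1 h2 e1, ?_, ?_, ?_⟩
    · field_simp
      nlinarith [e3]
    · field_simp
      nlinarith [e4, e5]
    · field_simp
      nlinarith [e5]
  refine ⟨key, ?_⟩
  intro A1 A2 A3 A4 A5 B1 B2 B3 B4 B5 hA1 hA2 hA3 hA4 hA5 hB1 hB2 hB3 hB4 hB5
    eA1 eA2 eA3 eA4 eA5 eB1 eB2 eB3 eB4 eB5 htot
  obtain ⟨a1, a3, a4, a5⟩ := key A1 A2 A3 A4 A5 hA1 hA2 hA3 hA4 hA5 eA1 eA2 eA3 eA4 eA5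
  obtain ⟨b1, b3, b4, b5⟩ := key B1 B2 B3 B4 B5 hB1 hB2 hB3 hB4 hB5 eB1 eB2 eB3 eB4 eB5
  have hA1B1 : A1 = B1 := by rw [a1, b1]
  have hc : (0:ℝ) < 1 + 1 / β + k4 / k5 + k4 / k6 := by positivity
  have hA2B2 : A2 = B2 := by
    have : A2 * (1 + 1 / β + k4 / k5 + k4 / k6) = B2 * (1 + 1 / β + k4 / k5 + k4 / k6) := by
      rw [a3, a4, a5, b3, b4, b5, hA1B1] at htot
      ring_nf
      ring_nf at htot
      linarith
    exact mul_right_cancel₀ (ne_of_gt hc) this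
  exact ⟨hA1B1, hA2B2, by rw [a3, b3, hA2B2], by rw [a4, b4, hA2B2], by rw [a5, b5, hA2B2]⟩
end

section
/- In the BECCS system with p1 = p2 = 1, the atmospheric carbon A2 takes the same value at every positive steady state: every positive steady state value of A2 is a root of k1·x^{q1} − k2·x^{q2} = k6, an equation independent of A1. Consequently, A3 = A2/β is also invariant across positive steady states (ACR in A2 and A3). -/
open Real

lemma root_eq (k1 k2 k6 q1 q2 x y : ℝ) (hk1 : 0 < k1) (hk2 : 0 < k2)
    (hq1 : 0 < q1) (hq2 : q2 < 0) (hx : 0 < x) (hy : 0 < y)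
    (hxe : k1 * x ^ q1 - k2 * x ^ q2 = k6)
    (hye : k1 * y ^ q1 - k2 * y ^ q2 = k6) : x = y := by
  rcases lt_trichotomy x y with h | h | h
  · have h1 := Real.rpow_lt_rpow hx.le h hq1
    have h2 := Real.rpow_lt_rpow_of_neg hx h hq2
    nlinarith
  · exact h
  · have h1 := Real.rpow_lt_rpow hy.le h hq1
    have h2 := Real.rpow_lt_rpow_of_neg hy h hq2
    nlinarith

/-- ACR in `A2` and `A3` for the P-null BECCS system with `p1 = p2 = 1` and
`q1 > 0 > q2`: any two positive steady states have the same `A2` and `A3`. -/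
theorem stmt_10 (k1 k2 k5 k6 k7 a β q1 q2 : ℝ)
    (hk1 : 0 < k1) (hk2 : 0 < k2) (hk5 : 0 < k5) (hk6 : 0 < k6) (hk7 : 0 < k7)
    (ha : 0 < a) (hβ : 0 < β) (hq1 : 0 < q1) (hq2 : q2 < 0)
    (A1 A2 A3 A4 A8 B1 B2 B3 B4 B8 : ℝ)
    (hA1 : 0 < A1) (hA2 : 0 < A2) (hA3 : 0 < A3) (hA4 : 0 < A4) (hA8 : 0 < A8)
    (hB1 : 0 < B1) (hB2 : 0 < B2) (hB3 : 0 < B3) (hB4 : 0 < B4) (hB8 : 0 < B8)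
    (hA_1 : k1 * A1 ^ (1:ℝ) * A2 ^ q1 - k2 * A1 ^ (1:ℝ) * A2 ^ q2 - k6 * A1 = 0)
    (hA_2 : k2 * A1 ^ (1:ℝ) * A2 ^ q2 - k1 * A1 ^ (1:ℝ) * A2 ^ q1 + k5 * A4
       - a * A2 + a * β * A3 = 0)
    (hA_3 : a * A2 - a * β * A3 = 0)
    (hA_4 : k7 * A8 - k5 * A4 = 0)
    (hA_8 : k6 * A1 - k7 * A8 = 0)
    (hB_1 : k1 * B1 ^ (1:ℝ) * B2 ^ q1 - k2 * B1 ^ (1:ℝ) * B2 ^ q2 - k6 * B1 = 0)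
    (hB_2 : k2 * B1 ^ (1:ℝ) * B2 ^ q2 - k1 * B1 ^ (1:ℝ) * B2 ^ q1 + k5 * B4
       - a * B2 + a * β * B3 = 0)
    (hB_3 : a * B2 - a * β * B3 = 0)
    (hB_4 : k7 * B8 - k5 * B4 = 0)
    (hB_8 : k6 * B1 - k7 * B8 = 0) :
    (k1 * A2 ^ q1 - k2 * A2 ^ q2 = k6 ∧ k1 * B2 ^ q1 - k2 * B2 ^ q2 = k6) ∧
    A2 = B2 ∧ A3 = B3 := by
  rw [Real.rpow_one] at hA_1 hB_1
  have hA : k1 * A2 ^ q1 - k2 * A2 ^ q2 = k6 := by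
    have : A1 * (k1 * A2 ^ q1 - k2 * A2 ^ q2 - k6) = 0 := by ring_nf; linarith [hA_1]
    have := (mul_eq_zero.mp this).resolve_left hA1.ne'
    linarith
  have hB : k1 * B2 ^ q1 - k2 * B2 ^ q2 = k6 := by
    have : B1 * (k1 * B2 ^ q1 - k2 * B2 ^ q2 - k6) = 0 := by ring_nf; linarith [hB_1]
    have := (mul_eq_zero.mp this).resolve_left hB1.ne'
    linarith
  have h2 : A2 = B2 := root_eq k1 k2 k6 q1 q2 A2 B2 hk1 hk2 hq1 hq2 hA2 hB2 hA hB
  refine ⟨⟨hA, hB⟩, h2, ?_⟩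
  have : a * β * A3 = a * β * B3 := by rw [← h2] at hB_3; linarith
  have hab : a * β ≠ 0 := by positivity
  exact mul_left_cancel₀ hab this
end

section
/- In the BECCS system, if (p1, p2) ≠ (1, 1) (and kinetic orders are such that multiple values of τ1 = A1 occur at steady states), then A2 is not an ACR species: there exist two positive steady states with different A2 values. Concretely, if at steady state k1·τ1^{p1−1}·A2^{q1} − k2·τ1^{p2−1}·A2^{q2} = k6 and A2 were constant across steady states while τ1 varies, taking logarithms yields a contradiction when p1 ≠ 1 or p2 ≠ 1. -/
open Real Set

lemma aux_alg (a b x y : ℝ) (ha : 0 < a) (hb : 0 < b) (hab : a ≠ b)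
    (hx : 0 < x) (hy : 0 < y)
    (e1 : a * x - b * y = a - b)
    (e2 : a * (x * x) - b * (y * y) = a - b)
    (e3 : a * (x * x * x) - b * (y * y * y) = a - b) :
    x = 1 ∧ y = 1 := by
  by_cases hx1 : x = 1
  · subst hx1
    constructor
    · rfl
    · have : b * y = b := by linarith
      have := hb.ne'
      rw [← mul_right_inj' this]
      nlinarith
  · exfalso
    have c1 : a * x * (x - 1) = b * y * (y - 1) := by nlinarith [e1, e2]
    have c2 : a * (x * x) * (x - 1) = b * (y * y) * (y - 1) := by nlinarith [e2, e3]
    have hy1 : y ≠ 1 := by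
      intro h
      subst h
      have : a * x * (x - 1) = 0 := by linarith [c1]
      rcases mul_eq_zero.mp this with h' | h'
      · rcases mul_eq_zero.mp h' with h'' | h''
        · exact absurd h'' ha.ne'
        · exact absurd h'' hx.ne'
      · exact hx1 (by linarith)
    have key : b * y * (y - 1) * (x - y) = 0 := by nlinarith [c1, c2]
    have hxy : x = y := by
      rcases mul_eq_zero.mp key with h' | h'
      · rcases mul_eq_zero.mp h' with h'' | h''
        · rcases mul_eq_zero.mp h'' with h3 | h3
          · exact absurd h3 hb.ne'
          · exact absurd h3 hy.ne'
        · exact absurd (by linarith : y = 1) hy1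
      · linarith
    subst hxy
    have : (a - b) * (x - 1) = 0 := by ring_nf; ring_nf at e1; linarith
    rcases mul_eq_zero.mp this with h' | h'
    · exact hab (by linarith)
    · exact hx1 (by linarith)

/-- If `A2 = c` were constant across BECCS steady states while `τ1` varies, i.e.
`τ ↦ k1 τ^{p1-1} c^{q1} - k2 τ^{p2-1} c^{q2}` is constant on `(0,∞)`, then
necessarily `p1 = 1` and `p2 = 1` (assuming no coefficient cancellation). -/
theorem stmt_12 (k1 k2 c p1 p2 q1 q2 : ℝ)
    (hk1 : 0 < k1) (hk2 : 0 < k2) (hc : 0 < c) (hq : q1 ≠ q2)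
    (hnc : k1 * c ^ q1 ≠ k2 * c ^ q2)
    (hconst : ∀ τ ∈ Ioi (0:ℝ),
      k1 * τ ^ (p1 - 1) * c ^ q1 - k2 * τ ^ (p2 - 1) * c ^ q2
        = k1 * (1:ℝ) ^ (p1 - 1) * c ^ q1 - k2 * (1:ℝ) ^ (p2 - 1) * c ^ q2) :
    p1 = 1 ∧ p2 = 1 := by
  set a := k1 * c ^ q1 with ha_def
  set b := k2 * c ^ q2 with hb_def
  have ha : 0 < a := mul_pos hk1 (rpow_pos_of_pos hc _)
  have hb : 0 < b := mul_pos hk2 (rpow_pos_of_pos hc _)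
  have key : ∀ t : ℝ, 0 < t → t ^ (p1 - 1) = 1 ∧ t ^ (p2 - 1) = 1 := by
    intro t ht
    have hx : 0 < t ^ (p1 - 1) := rpow_pos_of_pos ht _
    have hy : 0 < t ^ (p2 - 1) := rpow_pos_of_pos ht _
    have h1 := hconst t (mem_Ioi.mpr ht)
    have h2 := hconst (t * t) (mem_Ioi.mpr (mul_pos ht ht))
    have h3 := hconst (t * t * t) (mem_Ioi.mpr (mul_pos (mul_pos ht ht) ht))
    rw [Real.mul_rpow ht.le ht.le, Real.mul_rpow ht.le ht.le] at h2
    rw [Real.mul_rpow (mul_pos ht ht).le ht.le, Real.mul_rpow ht.le ht.le,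
        Real.mul_rpow (mul_pos ht ht).le ht.le, Real.mul_rpow ht.le ht.le] at h3
    simp only [Real.one_rpow] at h1 h2 h3
    exact aux_alg a b (t ^ (p1 - 1)) (t ^ (p2 - 1)) ha hb hnc hx hy
      (by rw [ha_def, hb_def]; linear_combination h1)
      (by rw [ha_def, hb_def]; linear_combination h2)
      (by rw [ha_def, hb_def]; linear_combination h3)
  have he : (0:ℝ) < Real.exp 1 := Real.exp_pos 1
  obtain ⟨k1', k2'⟩ := key (Real.exp 1) he
  rw [Real.exp_one_rpow] at k1' k2'
  rw [Real.exp_eq_one_iff] at k1' k2'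
  constructor <;> linarith
end

section
/- The determinant of the symbolic injectivity matrix M* for the BECCS system is a polynomial whose terms all have positive coefficients whenever (i) p1 < 0, p2 > 0, q1 > 0, q2 < 0, or (ii) p1 = p2 = 0, q1 > 0, q2 < 0, or (iii) q1 = q2 = 0, p1 < 0, p2 > 0. Specifically, the polynomial det(M*) = −p1·k1k2k4k5·z1z3z5z7 − p1·k1k3k4k5·z1z4z5z7 + p2·k1k2k4k5·z2z3z5z7 + p2·k1k3k4k5·z2z4z5z7 + q1·k1k2k3k4·z1z4z5z6 + q1·k1k2k3k5·z1z4z6z7 + q1·k2k3k4k5·z1z4z5z7 − q2·k1k2k3k4·z2z4z5z6 − q2·k1k2k3k5·z2z4z6z7 − q2·k2k3k4k5·z2z4z5z7 + k1k2k4k5·z3z5z6z7 + k1k3k4k5·z4z5z6z7 is strictly positive for all positive values of the k's and z's under each of conditions (i)–(iii). -/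
/-- The Wiuf–Feliu injectivity determinant of the BECCS system is strictly
positive on the positive orthant under each of the conditions
(i) `p1 < 0, p2 > 0, q1 > 0, q2 < 0`; (ii) `p1 = p2 = 0, q1 > 0, q2 < 0`;
(iii) `q1 = q2 = 0, p1 < 0, p2 > 0`. -/
theorem stmt_16 (p1 p2 q1 q2 : ℝ)
    (hcase : (p1 < 0 ∧ 0 < p2 ∧ 0 < q1 ∧ q2 < 0) ∨
             (p1 = 0 ∧ p2 = 0 ∧ 0 < q1 ∧ q2 < 0) ∨
             (q1 = 0 ∧ q2 = 0 ∧ p1 < 0 ∧ 0 < p2)) :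
    ∀ k1 k2 k3 k4 k5 z1 z2 z3 z4 z5 z6 z7 : ℝ,
      0 < k1 → 0 < k2 → 0 < k3 → 0 < k4 → 0 < k5 →
      0 < z1 → 0 < z2 → 0 < z3 → 0 < z4 → 0 < z5 → 0 < z6 → 0 < z7 →
      0 < -p1 * (k1*k2*k4*k5) * (z1*z3*z5*z7) - p1 * (k1*k3*k4*k5) * (z1*z4*z5*z7)
          + p2 * (k1*k2*k4*k5) * (z2*z3*z5*z7) + p2 * (k1*k3*k4*k5) * (z2*z4*z5*z7)
          + q1 * (k1*k2*k3*k4) * (z1*z4*z5*z6) + q1 * (k1*k2*k3*k5) * (z1*z4*z6*z7)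
          + q1 * (k2*k3*k4*k5) * (z1*z4*z5*z7) - q2 * (k1*k2*k3*k4) * (z2*z4*z5*z6)
          - q2 * (k1*k2*k3*k5) * (z2*z4*z6*z7) - q2 * (k2*k3*k4*k5) * (z2*z4*z5*z7)
          + (k1*k2*k4*k5) * (z3*z5*z6*z7) + (k1*k3*k4*k5) * (z4*z5*z6*z7) := by
  have hp1 : 0 ≤ -p1 := by rcases hcase with ⟨h,_⟩|⟨h,_⟩|⟨_,_,h,_⟩ <;> linarith
  have hp2 : 0 ≤ p2 := by rcases hcase with ⟨_,h,_⟩|⟨_,h,_⟩|⟨_,_,_,h⟩ <;> linarith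
  have hq1 : 0 ≤ q1 := by rcases hcase with ⟨_,_,h,_⟩|⟨_,_,h,_⟩|⟨h,_⟩ <;> linarith
  have hq2 : 0 ≤ -q2 := by rcases hcase with ⟨_,_,_,h⟩|⟨_,_,_,h⟩|⟨_,h,_⟩ <;> linarith
  intro k1 k2 k3 k4 k5 z1 z2 z3 z4 z5 z6 z7 hk1 hk2 hk3 hk4 hk5 hz1 hz2 hz3 hz4 hz5 hz6 hz7
  have h1 : 0 ≤ -p1 * ((k1*k2*k4*k5) * (z1*z3*z5*z7)) := mul_nonneg hp1 (by positivity)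
  have h2 : 0 ≤ -p1 * ((k1*k3*k4*k5) * (z1*z4*z5*z7)) := mul_nonneg hp1 (by positivity)
  have h3 : 0 ≤ p2 * ((k1*k2*k4*k5) * (z2*z3*z5*z7)) := mul_nonneg hp2 (by positivity)
  have h4 : 0 ≤ p2 * ((k1*k3*k4*k5) * (z2*z4*z5*z7)) := mul_nonneg hp2 (by positivity)
  have h5 : 0 ≤ q1 * ((k1*k2*k3*k4) * (z1*z4*z5*z6)) := mul_nonneg hq1 (by positivity)
  have h6 : 0 ≤ q1 * ((k1*k2*k3*k5) * (z1*z4*z6*z7)) := mul_nonneg hq1 (by positivity)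
  have h7 : 0 ≤ q1 * ((k2*k3*k4*k5) * (z1*z4*z5*z7)) := mul_nonneg hq1 (by positivity)
  have h8 : 0 ≤ -q2 * ((k1*k2*k3*k4) * (z2*z4*z5*z6)) := mul_nonneg hq2 (by positivity)
  have h9 : 0 ≤ -q2 * ((k1*k2*k3*k5) * (z2*z4*z6*z7)) := mul_nonneg hq2 (by positivity)
  have h10 : 0 ≤ -q2 * ((k2*k3*k4*k5) * (z2*z4*z5*z7)) := mul_nonneg hq2 (by positivity)
  have h11 : 0 < (k1*k2*k4*k5) * (z3*z5*z6*z7) := by positivity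
  have h12 : 0 < (k1*k3*k4*k5) * (z4*z5*z6*z7) := by positivity
  nlinarith [h1, h2, h3, h4, h5, h6, h7, h8, h9, h10, h11, h12]
end
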